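/- The number of parking functions of size n whose parking permutation avoids 132, 213, and 231 equals ∑_{k=1}^n k!. -/

import Mathlib

open Finset

noncomputable section

/-- The parking process over the first `k` cars (cars are `0,...,k-1`, i.e. cars `1,...,k`
in 1-indexed terms): returns `some occ` where `occ` maps each spot to the car parked there
(`none` meaning empty), or `none` if some car failed to park.  Car `c` drives to its
preferred spot `f c` and parks at the first free spot with index `≥ f c`, failing if
no such spot exists. -/
def parkAux {n : ℕ} (f : Fin n → Fin n) : ℕ → Option (Fin n → Option (Fin n))
  | 0 => some fun _ => none
  | k + 1 =>
    (parkAux f k).bind fun occ =>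
      if h : k < n then
        if hS : (Finset.univ.filter fun s => f ⟨k, h⟩ ≤ s ∧ occ s = none).Nonempty then
          some (Function.update occ
            ((Finset.univ.filter fun s => f ⟨k, h⟩ ≤ s ∧ occ s = none).min' hS)
            (some ⟨k, h⟩))
        else none
      else some occ

/-- All `n` cars park successfully. -/
def AllPark {n : ℕ} (f : Fin n → Fin n) : Prop := (parkAux f n).isSome

/-- `f` is a parking function: for every `i ∈ [n]`, at least `i` cars prefer
the first `i` spots.  (Here `i : Fin n` denotes the `(i+1)`-st spot, 0-indexed.) -/
def IsParkingFunction {n : ℕ} (f : Fin n → Fin n) : Prop :=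
  ∀ i : Fin n, i.val + 1 ≤ (Finset.univ.filter fun j => f j ≤ i).card

/-- `ρ` is the parking permutation of `f`: after all cars have parked,
spot `i` is occupied by car `ρ i`. -/
def IsParkingPerm {n : ℕ} (f : Fin n → Fin n) (ρ : Equiv.Perm (Fin n)) : Prop :=
  parkAux f n = some fun i => some (ρ i)

/-- `π` contains `σ` as a pattern. -/
def ContainsPattern {n m : ℕ} (π : Equiv.Perm (Fin n)) (σ : Equiv.Perm (Fin m)) : Prop :=
  ∃ g : Fin m → Fin n, StrictMono g ∧ ∀ a b : Fin m, σ a < σ b ↔ π (g a) < π (g b)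

/-- `ρ` avoids every pattern in the list `pats`. -/
def AvoidsAll {n : ℕ} (ρ : Equiv.Perm (Fin n)) (pats : List (Equiv.Perm (Fin 3))) : Prop :=
  ∀ σ ∈ pats, ¬ ContainsPattern ρ σ

/-- The number of parking functions of size `n` whose parking permutation avoids
all patterns in `pats`. -/
def pk (n : ℕ) (pats : List (Equiv.Perm (Fin 3))) : ℕ :=
  Nat.card {f : Fin n → Fin n // IsParkingFunction f ∧
    ∃ ρ : Equiv.Perm (Fin n), IsParkingPerm f ρ ∧ AvoidsAll ρ pats}

def p123 : Equiv.Perm (Fin 3) := Equiv.ofBijective ![0, 1, 2] (by decide)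
def p132 : Equiv.Perm (Fin 3) := Equiv.ofBijective ![0, 2, 1] (by decide)
def p213 : Equiv.Perm (Fin 3) := Equiv.ofBijective ![1, 0, 2] (by decide)
def p231 : Equiv.Perm (Fin 3) := Equiv.ofBijective ![1, 2, 0] (by decide)
def p312 : Equiv.Perm (Fin 3) := Equiv.ofBijective ![2, 0, 1] (by decide)
def p321 : Equiv.Perm (Fin 3) := Equiv.ofBijective ![2, 1, 0] (by decide)

/-!
A permutation avoids 132, 213 and 231 exactly when it is `vShape v`: the `v` largest values in
decreasing order followed by the others in increasing order, `v` being the position of the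
minimum. Parking is greedy, car `c` taking the first spot at or after `f c` that no earlier car
holds; hence `f` parks as `vShape v` iff each of the first `n - v` cars `i` prefers a spot in
`[v, v + i]` and every later car prefers exactly the spot it ends in. These are `(n - v)!`
functions, all of them parking functions, and summing over `v < n` gives `∑_{k=1}^n k!`.
-/

open Equiv Function

section Patterns

variable {n : ℕ}

theorem lt_iff_lt_of_forall_lt_iff {α β γ : Type*} [LinearOrder α] [LinearOrder β]
    [LinearOrder γ] {f : α → β} {g : α → γ} (hf : Injective f) (hg : Injective g)
    (h : ∀ a b, a < b → (f a < f b ↔ g a < g b)) (a b : α) : f a < f b ↔ g a < g b := by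
  rcases lt_trichotomy a b with hab | rfl | hba
  · exact h a b hab
  · simp
  · rw [← not_iff_not, not_lt, not_lt, le_iff_lt_or_eq, le_iff_lt_or_eq, h b a hba,
      hf.eq_iff, hg.eq_iff]

theorem Equiv.Perm.ext_of_lt_iff_lt {ρ σ : Perm (Fin n)}
    (h : ∀ s t, s < t → (ρ s < ρ t ↔ σ s < σ t)) : ρ = σ := by
  have hmono : StrictMono (ρ ∘ σ.symm) := fun x y hxy => by
    simpa using (lt_iff_lt_of_forall_lt_iff σ.injective ρ.injective
      (fun s t hst => (h s t hst).symm) (σ.symm x) (σ.symm y)).mp (by simpa using hxy)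
  have hid : ρ ∘ σ.symm = id :=
    (hmono.range_inj strictMono_id).mp (by simp [Set.range_comp, Set.range_id])
  exact Equiv.ext fun s => by simpa using congrFun hid (σ s)

theorem containsPattern_fin_three_iff {π : Perm (Fin n)} {σ : Perm (Fin 3)} :
    ContainsPattern π σ ↔ ∃ a b c, a < b ∧ b < c ∧ (σ 0 < σ 1 ↔ π a < π b) ∧
      (σ 0 < σ 2 ↔ π a < π c) ∧ (σ 1 < σ 2 ↔ π b < π c) := by
  constructor
  · rintro ⟨g, hg, hgσ⟩
    exact ⟨g 0, g 1, g 2, hg (by decide), hg (by decide), hgσ 0 1, hgσ 0 2, hgσ 1 2⟩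
  · rintro ⟨a, b, c, hab, hbc, h01, h02, h12⟩
    have hg : StrictMono ![a, b, c] := Fin.strictMono_iff_lt_succ.mpr fun i => by
      fin_cases i <;> simpa
    refine ⟨![a, b, c], hg, lt_iff_lt_of_forall_lt_iff σ.injective
      (π.injective.comp hg.injective) fun x y hxy => ?_⟩
    fin_cases x <;> fin_cases y <;> simp_all

/-- The permutation `n-1, n-2, …, n-v, 0, 1, …, n-v-1` in one-line notation. -/
def vShape (v : Fin n) : Perm (Fin n) :=
  Equiv.ofBijective
    (fun s => if s < v then ⟨n - 1 - s, by omega⟩ else ⟨s - v, by omega⟩)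
    (Finite.injective_iff_bijective.mp fun s t hst => by
      split_ifs at hst <;> simp only [Fin.mk.injEq] at hst <;> omega)

theorem vShape_val (v s : Fin n) :
    (vShape v s : ℕ) = if s < v then n - 1 - s else s - v := by
  simp only [vShape, Equiv.ofBijective_apply]
  split_ifs <;> rfl

theorem vShape_lt_vShape_iff {v s t : Fin n} (hst : s < t) :
    vShape v s < vShape v t ↔ v ≤ s := by
  simp only [Fin.lt_def, Fin.le_def, vShape_val] at hst ⊢
  split_ifs <;> omega

theorem vShape_avoids (v : Fin n) : AvoidsAll (vShape v) [p132, p213, p231] := by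
  intro σ hσ hcont
  obtain ⟨a, b, c, hab, hbc, h01, h02, h12⟩ := containsPattern_fin_three_iff.mp hcont
  rw [vShape_lt_vShape_iff hab] at h01
  rw [vShape_lt_vShape_iff (hab.trans hbc)] at h02
  rw [vShape_lt_vShape_iff hbc] at h12
  simp only [List.mem_cons, List.not_mem_nil, or_false] at hσ
  rcases hσ with rfl | rfl | rfl <;> simp [p132, p213, p231] at h01 h02 h12 <;>
    order

/-- Any violation would form, together with the position `m` of the minimum, one of the
patterns 231, 213 (when `s < m`) or 132 (when `m < s`). -/
theorem apply_lt_apply_iff_of_avoids {ρ : Perm (Fin n)} (hρ : AvoidsAll ρ [p132, p213, p231])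
    {m : Fin n} (hm : ∀ s, ρ m ≤ ρ s) {s t : Fin n} (hst : s < t) : ρ s < ρ t ↔ m ≤ s := by
  have hmin : ∀ s, s ≠ m → ρ m < ρ s := fun s hs => (hm s).lt_of_ne (ρ.injective.ne hs.symm)
  have avoid : ∀ σ ∈ [p132, p213, p231], ∀ a b c, a < b → b < c →
      (σ 0 < σ 1 ↔ ρ a < ρ b) → (σ 0 < σ 2 ↔ ρ a < ρ c) → (σ 1 < σ 2 ↔ ρ b < ρ c) → False :=
    fun σ hσ a b c hab hbc h01 h02 h12 =>
      hρ σ hσ (containsPattern_fin_three_iff.mpr ⟨a, b, c, hab, hbc, h01, h02, h12⟩)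
  constructor
  · intro hlt
    by_contra! hsm
    rcases lt_trichotomy t m with htm | rfl | hmt
    · refine avoid p231 (by simp) s t m hst htm ?_ ?_ ?_ <;> simp [p231, hlt, (hm _).not_gt]
    · exact (hm s).not_gt hlt
    · refine avoid p213 (by simp) s m t hsm hmt ?_ ?_ ?_ <;>
        simp [p213, hlt, (hm _).not_gt, hmin t hmt.ne']
  · intro hms
    rcases hms.eq_or_lt with rfl | hms
    · exact hmin t hst.ne'
    · by_contra! hts
      refine avoid p132 (by simp) m s t hms hst ?_ ?_ ?_ <;>
        simp [p132, hmin s hms.ne', hmin t (hms.trans hst).ne', hts]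

theorem avoids_iff_exists_eq_vShape (hn : 0 < n) (ρ : Perm (Fin n)) :
    AvoidsAll ρ [p132, p213, p231] ↔ ∃ v, ρ = vShape v := by
  refine ⟨fun hρ => ?_, by rintro ⟨v, rfl⟩; exact vShape_avoids v⟩
  have : Nonempty (Fin n) := ⟨⟨0, hn⟩⟩
  obtain ⟨m, hm⟩ := Finite.exists_min ρ
  exact ⟨m, Perm.ext_of_lt_iff_lt fun s t hst => by
    rw [apply_lt_apply_iff_of_avoids hρ hm hst, vShape_lt_vShape_iff hst]⟩

end Patterns

section Parking

variable {n : ℕ} {f : Fin n → Fin n}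

def occupancy (ρ : Perm (Fin n)) (t : ℕ) (s : Fin n) : Option (Fin n) :=
  if (ρ s : ℕ) < t then some (ρ s) else none

theorem occupancy_eq_none_iff {ρ : Perm (Fin n)} {t : ℕ} {s : Fin n} :
    occupancy ρ t s = none ↔ t ≤ ρ s := by
  simp [occupancy]

theorem occupancy_succ (ρ : Perm (Fin n)) (c : Fin n) :
    occupancy ρ (c + 1) = update (occupancy ρ c) (ρ.symm c) (some c) := by
  funext s
  rcases eq_or_ne s (ρ.symm c) with rfl | hs
  · simp [occupancy]
  · have : (ρ s : ℕ) ≠ c := fun h => hs (ρ.eq_symm_apply.mpr (Fin.ext h))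
    simp only [occupancy, update_of_ne hs]
    split_ifs <;> first | rfl | omega

theorem occupancy_zero (ρ : Perm (Fin n)) : occupancy ρ 0 = fun _ => none :=
  funext fun _ => if_neg (Nat.not_lt_zero _)

theorem occupancy_of_le {ρ : Perm (Fin n)} {t : ℕ} (ht : n ≤ t) :
    occupancy ρ t = fun s => some (ρ s) :=
  funext fun s => if_pos (by omega)

theorem parkAux_zero : parkAux f 0 = some fun _ => none := rfl

theorem parkAux_succ_of_le {t : ℕ} (ht : n ≤ t) : parkAux f (t + 1) = parkAux f t := by
  cases h : parkAux f t <;> simp [parkAux, h, ht.not_gt]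

theorem parkAux_succ_eq_some_iff {c : Fin n} {o o' : Fin n → Option (Fin n)}
    (ho : parkAux f c = some o) :
    parkAux f (c + 1) = some o' ↔
      ∃ m, IsLeast {s | f c ≤ s ∧ o s = none} m ∧ o' = update o m (some c) := by
  classical
  rw [parkAux, ho, Option.bind_some, dif_pos c.isLt]
  split_ifs with hS
  · simp only [Option.some_inj]
    constructor
    · rintro rfl
      exact ⟨_, by simpa using isLeast_min' _ hS, rfl⟩
    · rintro ⟨m, hm, rfl⟩
      rw [((isLeast_min' _ hS).unique (by simpa using hm))]
  · simp only [false_iff, not_exists, not_and]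
    exact fun m hm => absurd ⟨m, by simpa using hm.1⟩ hS

theorem parkAux_eq_none_of_le {t t' : ℕ} (htt' : t ≤ t') (ht : parkAux f t = none) :
    parkAux f t' = none := by
  induction t', htt' using Nat.le_induction with
  | base => exact ht
  | succ t' _ ih => rw [parkAux, ih, Option.bind_none]

theorem parkAux_persist {t t' : ℕ} (htt' : t ≤ t') {o o' : Fin n → Option (Fin n)}
    (ho : parkAux f t = some o) (ho' : parkAux f t' = some o') {s c : Fin n}
    (hs : o s = some c) : o' s = some c := by
  induction t', htt' using Nat.le_induction generalizing o' with
  | base => rwa [← Option.some_inj.mp (ho.symm.trans ho')]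
  | succ t' _ ih =>
    cases h : parkAux f t' with
    | none => simp [parkAux, h] at ho'
    | some o₁ =>
      rcases lt_or_ge t' n with ht' | ht'
      · obtain ⟨m, hm, rfl⟩ := (parkAux_succ_eq_some_iff (c := ⟨t', ht'⟩) h).mp ho'
        have hms : s ≠ m := fun hsm => by simpa [hsm, hm.1.2] using ih h
        rw [update_of_ne hms, ih h]
      · rw [parkAux_succ_of_le ht', h, Option.some_inj] at ho'
        rw [← ho', ih h]

theorem parkAux_succ_eq_occupancy_iff {ρ : Perm (Fin n)} {c : Fin n}
    (hc : parkAux f c = some (occupancy ρ c)) :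
    parkAux f (c + 1) = some (occupancy ρ (c + 1)) ↔
      IsLeast {s | f c ≤ s ∧ c ≤ ρ s} (ρ.symm c) := by
  have hfree : {s | f c ≤ s ∧ occupancy ρ c s = none} = {s | f c ≤ s ∧ c ≤ ρ s} := by
    simp only [occupancy_eq_none_iff, Fin.le_def]
  rw [parkAux_succ_eq_some_iff hc, hfree]
  refine ⟨fun ⟨m, hm, hupd⟩ => ?_, fun h => ⟨_, h, occupancy_succ ρ c⟩⟩
  have hρm : ρ m = c := by
    have := congrFun hupd m
    simp only [update_self, occupancy] at this
    split_ifs at this with h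
    exact Option.some_inj.mp this
  rwa [← ρ.eq_symm_apply.mpr hρm]

theorem parkAux_eq_occupancy {ρ : Perm (Fin n)} (h : IsParkingPerm f ρ) {t : ℕ}
    (ht : t ≤ n) : parkAux f t = some (occupancy ρ t) := by
  induction t with
  | zero => rw [parkAux_zero, occupancy_zero]
  | succ t ih =>
    let c : Fin n := ⟨t, ht⟩
    obtain ⟨o', ho'⟩ : ∃ o', parkAux f (c + 1) = some o' :=
      Option.ne_none_iff_exists'.mp fun hnone => by
        simp [IsParkingPerm, parkAux_eq_none_of_le ht hnone] at h
    obtain ⟨m, hm, rfl⟩ := (parkAux_succ_eq_some_iff (ih (by omega))).mp ho'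
    -- a car never leaves its spot, so the spot `m` taken by car `c` is `ρ.symm c`
    have hρm : ρ m = c := by simpa using parkAux_persist ht ho' h (update_self ..)
    rw [ho', ρ.eq_symm_apply.mpr hρm]
    exact congrArg some (occupancy_succ ρ c).symm

theorem isParkingPerm_iff {ρ : Perm (Fin n)} :
    IsParkingPerm f ρ ↔ ∀ c, IsLeast {s | f c ≤ s ∧ c ≤ ρ s} (ρ.symm c) := by
  refine ⟨fun h c => (parkAux_succ_eq_occupancy_iff (parkAux_eq_occupancy h c.isLt.le)).mp
    (parkAux_eq_occupancy h c.isLt), fun h => ?_⟩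
  have hocc : ∀ t ≤ n, parkAux f t = some (occupancy ρ t) := by
    intro t ht
    induction t with
    | zero => rw [parkAux_zero, occupancy_zero]
    | succ t ih =>
      exact (parkAux_succ_eq_occupancy_iff (c := ⟨t, ht⟩) (ih (by omega))).mpr (h _)
  rw [IsParkingPerm, hocc n le_rfl, occupancy_of_le le_rfl]

theorem IsParkingPerm.isParkingFunction {ρ : Perm (Fin n)} (h : IsParkingPerm f ρ) :
    IsParkingFunction f := by
  intro i
  have hpref : ∀ s, f (ρ s) ≤ s := fun s => by simpa using (isParkingPerm_iff.mp h (ρ s)).1.1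
  calc i.val + 1 = #((Iic i).map ρ.toEmbedding) := by rw [card_map, Fin.card_Iic]
    _ ≤ _ := card_le_card fun c hc => by
      obtain ⟨s, hs, rfl⟩ := mem_map.mp hc
      simpa using (hpref s).trans (mem_Iic.mp hs)

end Parking

section VShapeParking

variable {n : ℕ}

def vShapePrefs (v i : Fin n) : Finset (Fin n) :=
  if h : (i : ℕ) < n - v then Icc v ⟨(v : ℕ) + i, by omega⟩ else {⟨n - 1 - i, by omega⟩}

theorem mem_vShapePrefs {v i p : Fin n} :
    p ∈ vShapePrefs v i ↔
      if (i : ℕ) < n - v then (v : ℕ) ≤ p ∧ (p : ℕ) ≤ v + i else (p : ℕ) = n - 1 - i := by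
  unfold vShapePrefs
  split_ifs
  · simp only [mem_Icc, Fin.le_def]
  · simp only [mem_singleton, Fin.ext_iff]

theorem card_vShapePrefs (v i : Fin n) :
    #(vShapePrefs v i) = if (i : ℕ) < n - v then (i : ℕ) + 1 else 1 := by
  unfold vShapePrefs
  split_ifs
  · simp only [Fin.card_Icc]; omega
  · rfl

theorem card_piFinset_vShapePrefs (v : Fin n) :
    #(Fintype.piFinset (vShapePrefs v)) = (n - v).factorial := by
  rw [Fintype.card_piFinset, ← prod_range_add_one_eq_factorial]
  simp only [card_vShapePrefs]
  rw [Fin.prod_univ_eq_prod_range (fun i => if i < n - v then i + 1 else 1), ← prod_filter,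
    show (range n).filter (· < n - v) = range (n - v) by ext; simp; omega]

theorem vShape_symm_val (v c : Fin n) :
    ((vShape v).symm c : ℕ) = if (c : ℕ) < n - v then (c : ℕ) + v else n - 1 - c := by
  have h := congrArg Fin.val ((vShape v).apply_symm_apply c)
  rw [vShape_val] at h
  have := ((vShape v).symm c).isLt
  split_ifs at h ⊢ <;> omega

theorem isLeast_vShape_iff {v c p : Fin n} :
    IsLeast {s | p ≤ s ∧ c ≤ vShape v s} ((vShape v).symm c) ↔ p ∈ vShapePrefs v c := by
  simp only [IsLeast, lowerBounds, Set.mem_ofPred_eq, apply_symm_apply, le_refl, and_true,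
    mem_vShapePrefs, Fin.le_def, vShape_symm_val, and_imp]
  constructor
  · rintro ⟨hpc, hlb⟩
    have := @hlb p le_rfl
    rw [vShape_val] at this
    split_ifs at * <;> omega
  · intro hp
    refine ⟨by split_ifs at * <;> omega, fun s hps hcs => ?_⟩
    rw [vShape_val] at hcs
    split_ifs at * <;> omega

theorem isParkingPerm_vShape_iff {f : Fin n → Fin n} {v : Fin n} :
    IsParkingPerm f (vShape v) ↔ ∀ i, f i ∈ vShapePrefs v i := by
  rw [isParkingPerm_iff]
  exact forall_congr' fun c => isLeast_vShape_iff

end VShapeParking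

theorem isParkingFunction_and_avoids_iff {n : ℕ} (hn : 0 < n) (f : Fin n → Fin n) :
    (IsParkingFunction f ∧
      ∃ ρ : Perm (Fin n), IsParkingPerm f ρ ∧ AvoidsAll ρ [p132, p213, p231]) ↔
      ∃ v, f ∈ Fintype.piFinset (vShapePrefs v) := by
  simp only [avoids_iff_exists_eq_vShape hn, Fintype.mem_piFinset]
  constructor
  · rintro ⟨-, _, hf, v, rfl⟩
    exact ⟨v, isParkingPerm_vShape_iff.mp hf⟩
  · rintro ⟨v, hv⟩
    have hf := isParkingPerm_vShape_iff.mpr hv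
    exact ⟨hf.isParkingFunction, _, hf, v, rfl⟩

theorem pairwiseDisjoint_piFinset_vShapePrefs (n : ℕ) :
    ((univ : Finset (Fin n)) : Set (Fin n)).PairwiseDisjoint
      fun v => Fintype.piFinset (vShapePrefs v) := by
  intro v _ w _ hvw
  refine disjoint_left.mpr fun f hv hw => hvw ?_
  have first_pref (u : Fin n) (hu : f ∈ Fintype.piFinset (vShapePrefs u)) :
      (f ⟨0, v.pos⟩ : ℕ) = u := by
    have := mem_vShapePrefs.mp (Fintype.mem_piFinset.mp hu ⟨0, v.pos⟩)
    simp only [if_pos (Nat.sub_pos_of_lt u.isLt)] at this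
    omega
  exact Fin.ext ((first_pref v hv).symm.trans (first_pref w hw))

theorem sum_factorial_sub_eq_sum_Icc (n : ℕ) :
    ∑ v : Fin n, (n - v).factorial = ∑ k ∈ Icc 1 n, k.factorial :=
  sum_bij' (fun v _ => n - v) (fun k hk => ⟨n - k, by grind⟩) (by grind) (by grind)
    (by grind) (by grind) (by grind)

theorem stmt10 (n : ℕ) (hn : 1 ≤ n) :
    pk n [p132, p213, p231] = ∑ k ∈ Finset.Icc 1 n, k.factorial := by
  classical
  rw [pk, Nat.card_eq_fintype_card, Fintype.card_subtype]
  have hset : univ.filter (fun f : Fin n → Fin n => IsParkingFunction f ∧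
        ∃ ρ : Perm (Fin n), IsParkingPerm f ρ ∧ AvoidsAll ρ [p132, p213, p231]) =
      univ.biUnion fun v => Fintype.piFinset (vShapePrefs v) := by
    ext f
    simpa using isParkingFunction_and_avoids_iff hn f
  rw [hset, card_biUnion (pairwiseDisjoint_piFinset_vShapePrefs n)]
  simp only [card_piFinset_vShapePrefs]
  exact sum_factorial_sub_eq_sum_Icc n
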